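/- arXiv:2006.08801 — 7 statements merged into one kernel-verified Lean document; each statement's English description precedes it below -/
import Mathlib

section
/- With p_m(z) the characteristic polynomial of the 2m×2m block Toeplitz matrix T_m as above (and p_0(z) := 1), the sequence satisfies the three-term recurrence p_{m+1}(z) = (z^2 - b^2 + a^2) p_m(z) - a^2 z^2 p_{m-1}(z) for all m ≥ 1. -/
/-- The 2m×2m block tridiagonal Toeplitz matrix with diagonal blocks
`A₀ = [[0,b],[b,0]]`, superdiagonal blocks `A₁ = [[a,0],[0,0]]` and
subdiagonal blocks `A₋₁ = [[0,0],[0,a]]`. -/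
def blockToeplitz (m : ℕ) (a b : ℂ) : Matrix (Fin (2 * m)) (Fin (2 * m)) ℂ :=
  Matrix.of fun i j =>
    if i.val / 2 = j.val / 2 ∧ i.val ≠ j.val then b
    else if j.val = i.val + 2 ∧ i.val % 2 = 0 then a
    else if i.val = j.val + 2 ∧ i.val % 2 = 1 then a
    else 0

/-- Characteristic polynomial of the block Toeplitz matrix (note the `0 × 0`
matrix has characteristic polynomial `1`, giving `p 0 = 1`). -/
noncomputable def pChar (m : ℕ) (a b z : ℂ) : ℂ :=
  (blockToeplitz m a b).charpoly.eval z

/-!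
Listing the even indices first and the odd ones second conjugates `T_m` to the block matrix
`[[a N, b], [b, a Nᵀ]]`, where `N` is the nilpotent upper shift. Its lower blocks commute, so the
characteristic polynomial is `det ((X - a N) (X - a Nᵀ) - b²)`; this needs `det (X - a Nᵀ) = Xᵐ`
to be cancellable, which is why the argument runs in `ℂ[X]` rather than at a point `z`. Since
`N Nᵀ = diag (1, …, 1, 0)`, the matrix `(X - a N) (X - a Nᵀ) - b²` is symmetric tridiagonal with
diagonal `X² - b² + a²` (last entry `X² - b²`) and off-diagonal `-a X`, and expanding its
determinant along the first row gives the recurrence.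
-/

namespace Matrix

variable {R : Type*} [CommRing R]

theorem det_fromBlocks_of_commute [IsDomain R] {n : Type*} [Fintype n] [DecidableEq n]
    (A B C D : Matrix n n R) (hCD : Commute C D) (hD : D.det ≠ 0) :
    (fromBlocks A B C D).det = (A * D - B * C).det := by
  have hmul : fromBlocks A B C D * fromBlocks D 0 (-C) 1 = fromBlocks (A * D - B * C) B 0 D := by
    rw [fromBlocks_multiply, hCD.eq]
    simp [sub_eq_add_neg]
  have := congrArg det hmul
  rw [det_mul, det_fromBlocks_zero₁₂, det_fromBlocks_zero₂₁, det_one, mul_one] at this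
  exact mul_right_cancel₀ hD this

theorem det_eq_of_tridiagonal_top {n : ℕ} (M : Matrix (Fin (n + 2)) (Fin (n + 2)) R)
    (hrow : ∀ j : Fin n, M 0 j.succ.succ = 0) (hcol : ∀ i : Fin n, M i.succ.succ 0 = 0) :
    M.det = M 0 0 * (M.submatrix Fin.succ Fin.succ).det
      - M 0 1 * M 1 0 * (M.submatrix (Fin.succ ∘ Fin.succ) (Fin.succ ∘ Fin.succ)).det := by
  have hminor : (M.submatrix Fin.succ (Fin.succAbove 1)).det
      = M 1 0 * (M.submatrix (Fin.succ ∘ Fin.succ) (Fin.succ ∘ Fin.succ)).det := by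
    rw [det_succ_column_zero, Fin.sum_univ_succ]
    simp only [submatrix_apply, Fin.succAbove_zero, Fin.val_zero, pow_zero, one_mul,
      Fin.succ_zero_eq_one, Fin.one_succAbove_zero, hcol, mul_zero, zero_mul,
      Finset.sum_const_zero, add_zero, submatrix_submatrix]
    rfl
  rw [det_succ_row_zero, Fin.sum_univ_succ, Fin.sum_univ_succ]
  simp only [hrow, mul_zero, zero_mul, Finset.sum_const_zero, add_zero, Fin.succ_zero_eq_one,
    hminor, Fin.succAbove_zero, Fin.val_zero, Fin.val_one, pow_zero, pow_one]
  ring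

def tridiagonal (n : ℕ) (d d' c : R) : Matrix (Fin n) (Fin n) R :=
  of fun i j =>
    if i = j then (if (i : ℕ) + 1 < n then d else d')
    else if (i : ℕ) + 1 = j ∨ (j : ℕ) + 1 = i then c else 0

theorem tridiagonal_submatrix_succ (n : ℕ) (d d' c : R) :
    (tridiagonal (n + 1) d d' c).submatrix Fin.succ Fin.succ = tridiagonal n d d' c := by
  ext i j
  simp only [tridiagonal, submatrix_apply, of_apply, Fin.succ_inj, Fin.val_succ]
  grind

theorem det_tridiagonal_add_two (n : ℕ) (d d' c : R) :
    (tridiagonal (n + 2) d d' c).det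
      = d * (tridiagonal (n + 1) d d' c).det - c ^ 2 * (tridiagonal n d d' c).det := by
  have hd : tridiagonal (n + 2) d d' c 0 0 = d := by simp [tridiagonal]
  have hc₁ : tridiagonal (n + 2) d d' c 0 1 = c := by simp [tridiagonal]
  have hc₂ : tridiagonal (n + 2) d d' c 1 0 = c := by simp [tridiagonal]
  rw [det_eq_of_tridiagonal_top, hd, hc₁, hc₂, tridiagonal_submatrix_succ, ← submatrix_submatrix,
    tridiagonal_submatrix_succ, tridiagonal_submatrix_succ, sq]
  all_goals intro k; simp [tridiagonal, Fin.ext_iff]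

def upperShift (n : ℕ) : Matrix (Fin n) (Fin n) R :=
  of fun i j => if (j : ℕ) = i + 1 then 1 else 0

theorem upperShift_map {S : Type*} [CommRing S] (f : R →+* S) (n : ℕ) :
    (upperShift n).map f = upperShift n := by
  ext i j
  simp only [upperShift, map_apply, of_apply]
  split_ifs <;> simp

theorem upperShift_mul_transpose (n : ℕ) :
    upperShift n * (upperShift n)ᵀ
      = diagonal fun i : Fin n => if (i : ℕ) + 1 < n then (1 : R) else 0 := by
  ext i j
  simp only [mul_apply, upperShift, transpose_apply, of_apply, mul_ite, mul_one, mul_zero,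
    diagonal_apply]
  rcases lt_or_ge ((j : ℕ) + 1) n with h | h
  · rw [Finset.sum_eq_single ⟨j + 1, h⟩ (fun k _ hk => if_neg fun e => hk (Fin.ext e))
      (by simp)]
    simp only [Fin.ext_iff]
    split_ifs <;> first | rfl | omega
  · rw [Finset.sum_eq_zero fun k _ => if_neg (by omega)]
    split_ifs <;> first | rfl | omega

theorem scalar_sub_smul_upperShift_mul_eq_tridiagonal (n : ℕ) (z a b : R) :
    (scalar (Fin n) z - a • upperShift n) * (scalar (Fin n) z - a • (upperShift n)ᵀ)
      - scalar (Fin n) (b ^ 2)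
      = tridiagonal n (z ^ 2 - b ^ 2 + a ^ 2) (z ^ 2 - b ^ 2) (-(a * z)) := by
  have hexp : (scalar (Fin n) z - a • upperShift n) * (scalar (Fin n) z - a • (upperShift n)ᵀ)
      = scalar (Fin n) (z ^ 2) - (a * z) • (upperShift n + (upperShift n)ᵀ)
        + a ^ 2 • (upperShift n * (upperShift n)ᵀ) := by
    simp only [scalar_apply, ← smul_one_eq_diagonal, sub_mul, mul_sub, Matrix.smul_mul,
      Matrix.mul_smul, Matrix.one_mul, Matrix.mul_one, smul_smul]
    module
  rw [hexp, upperShift_mul_transpose]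
  ext i j
  simp only [tridiagonal, upperShift, diagonal_apply, sub_apply, add_apply, smul_apply,
    scalar_apply, transpose_apply, of_apply, Fin.ext_iff, smul_eq_mul]
  split_ifs <;> (try omega) <;> ring

end Matrix

open Matrix Polynomial

def evenOddEquiv (m : ℕ) : Fin m ⊕ Fin m ≃ Fin (2 * m) where
  toFun := Sum.elim (fun k => ⟨2 * k, by omega⟩) (fun k => ⟨2 * k + 1, by omega⟩)
  invFun i := if (i : ℕ) % 2 = 0 then .inl ⟨i / 2, by omega⟩ else .inr ⟨i / 2, by omega⟩
  left_inv := by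
    rintro (k | k)
    · simp
    · simp [Fin.ext_iff]
      omega
  right_inv i := by
    by_cases h : (i : ℕ) % 2 = 0 <;> simp [h, Fin.ext_iff] <;> omega

theorem blockToeplitz_submatrix_evenOddEquiv (m : ℕ) (a b : ℂ) :
    (blockToeplitz m a b).submatrix (evenOddEquiv m) (evenOddEquiv m)
      = fromBlocks (a • upperShift m) (scalar (Fin m) b) (scalar (Fin m) b)
          (a • (upperShift m)ᵀ) := by
  ext (k | k) (l | l) <;>
    simp only [blockToeplitz, evenOddEquiv, upperShift, Equiv.coe_fn_mk, submatrix_apply,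
      Sum.elim_inl, Sum.elim_inr, of_apply, fromBlocks_apply₁₁, fromBlocks_apply₁₂,
      fromBlocks_apply₂₁, fromBlocks_apply₂₂, Matrix.smul_apply, transpose_apply, scalar_apply,
      diagonal_apply, smul_eq_mul, Fin.ext_iff] <;>
    split_ifs <;> first | omega | simp

theorem charpoly_blockToeplitz (m : ℕ) (a b : ℂ) :
    (blockToeplitz m a b).charpoly
      = (tridiagonal m (X ^ 2 - C b ^ 2 + C a ^ 2) (X ^ 2 - C b ^ 2) (-(C a * X))).det := by
  have hb : (scalar (Fin m) b).map C = scalar (Fin m) (C b) := by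
    simp [scalar_apply, diagonal_map]
  rw [← charpoly_reindex (evenOddEquiv m).symm, reindex_apply, Equiv.symm_symm,
    blockToeplitz_submatrix_evenOddEquiv, charpoly, charmatrix_fromBlocks,
    det_fromBlocks_of_commute, ← scalar_sub_smul_upperShift_mul_eq_tridiagonal]
  · simp only [charmatrix, RingHom.mapMatrix_apply, map_smul' _ _ _ (map_mul C), transpose_map,
      upperShift_map, hb]
    rw [neg_mul_neg, ← map_mul, ← sq]
  · rw [hb]
    exact (scalar_commute _ (fun _ => Commute.all _ _) _).neg_left
  · exact (charpoly_monic _).ne_zero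

theorem charpoly_blockToeplitz_add_two (n : ℕ) (a b : ℂ) :
    (blockToeplitz (n + 2) a b).charpoly
      = (X ^ 2 - C b ^ 2 + C a ^ 2) * (blockToeplitz (n + 1) a b).charpoly
        - C a ^ 2 * X ^ 2 * (blockToeplitz n a b).charpoly := by
  simp only [charpoly_blockToeplitz, det_tridiagonal_add_two]
  ring

theorem stmt_1_general (a b : ℂ) (m : ℕ) (hm : 1 ≤ m) (z : ℂ) :
    pChar (m + 1) a b z =
      (z ^ 2 - b ^ 2 + a ^ 2) * pChar m a b z - a ^ 2 * z ^ 2 * pChar (m - 1) a b z := by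
  obtain ⟨n, rfl⟩ : ∃ n, m = n + 1 := ⟨m - 1, by omega⟩
  simp [pChar, charpoly_blockToeplitz_add_two]

theorem stmt_1 (a b : ℂ) (ha : a ≠ 0) (hb : b ≠ 0) (m : ℕ) (hm : 1 ≤ m) (z : ℂ) :
    pChar (m + 1) a b z =
      (z ^ 2 - b ^ 2 + a ^ 2) * pChar m a b z - a ^ 2 * z ^ 2 * pChar (m - 1) a b z :=
  stmt_1_general a b m hm z
end

section
/- Let f be a complex polynomial of degree d with coefficients α_0,…,α_d. If R > 0 and an index 0 ≤ k ≤ d satisfy |α_k| R^k > ∑_{j≠k} |α_j| R^j, then f has exactly k roots (counted with multiplicity) of absolute value less than R. -/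
/-! With `g = α_k z ^ k`, the hypothesis says `‖f - g‖ < ‖g‖` on the circle `‖z‖ = R`, so by
Rouché's theorem `f` has as many roots in the disc as `g`, namely `k`. For polynomials Rouché's
theorem follows from the homotopy `g + t (f - g)`, `t ∈ [0, 1]`: no root crosses the circle, and
the number of roots inside is `(2πi)⁻¹ ∮ p' / p = ∑_a (2πi)⁻¹ ∮ dz / (z - a)`, an integer that
depends continuously on `t`. -/

open Polynomial Complex Metric Real

section

variable {c : ℂ} {R : ℝ}

theorem circleIntegral_sub_inv_eq_ite (hR : 0 ≤ R) {a : ℂ} (ha : dist a c ≠ R) :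
    (∮ z in C(c, R), (z - a)⁻¹) = if dist a c < R then 2 * π * I else 0 := by
  split_ifs with hlt
  · exact circleIntegral.integral_sub_inv_of_mem_ball hlt
  · refine DiffContOnCl.circleIntegral_eq_zero hR <|
      ((differentiableOn_id.sub_const a).inv fun z hz => sub_ne_zero.2 hz).diffContOnCl_ball ?_
    intro z hz rfl
    exact ha (le_antisymm (mem_closedBall.1 hz) (not_lt.1 hlt))

theorem circleIntegral_multiset_sum_sub_inv (hR : 0 ≤ R) (s : Multiset ℂ)
    (hs : ∀ a ∈ s, dist a c ≠ R) :
    (∮ z in C(c, R), (s.map fun a => (z - a)⁻¹).sum)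
      = 2 * π * I * (s.filter fun a => dist a c < R).card := by
  induction s using Multiset.induction_on with
  | empty => simp [circleIntegral]
  | cons a s ih =>
    have hint : ∀ t ≤ a ::ₘ s,
        CircleIntegrable (fun z => (t.map fun b => (z - b)⁻¹).sum) c R := by
      intro t ht
      refine ContinuousOn.circleIntegrable hR (continuousOn_multiset_sum _ fun b hb => ?_)
      refine ContinuousOn.inv₀ (by fun_prop) fun z hz h => hs b (Multiset.mem_of_le ht hb) ?_
      rw [sub_eq_zero] at h
      rwa [h] at hz
    have ha : CircleIntegrable (fun z => (z - a)⁻¹) c R := by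
      simpa using hint {a} (by simp)
    simp only [Multiset.map_cons, Multiset.sum_cons]
    rw [circleIntegral.integral_add ha (hint s (Multiset.le_cons_self s a)),
      ih fun b hb => hs b (Multiset.mem_cons_of_mem hb),
      circleIntegral_sub_inv_eq_ite hR (hs a (Multiset.mem_cons_self a s)), Multiset.filter_cons]
    split_ifs <;> simp; ring

theorem circleIntegral_derivative_div_eq_card_roots (hR : 0 ≤ R) (p : ℂ[X])
    (hp : ∀ z ∈ sphere c R, p.eval z ≠ 0) :
    (∮ z in C(c, R), p.derivative.eval z / p.eval z)
      = 2 * π * I * (p.roots.filter fun a => dist a c < R).card := by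
  rw [circleIntegral.integral_congr hR fun z hz =>
      (IsAlgClosed.splits p).eval_derivative_div_eval_of_ne_zero (hp z hz)]
  simp only [one_div]
  refine circleIntegral_multiset_sum_sub_inv hR _ fun a ha h => ?_
  by_cases hp0 : p = 0
  · simp [hp0] at ha
  · exact hp a h ((mem_roots hp0).1 ha)

theorem continuous_circleIntegral {X : Type*} [TopologicalSpace X] {F : X → ℂ → ℂ}
    (hF : Continuous fun q : X × ℝ => F q.1 (circleMap c R q.2)) :
    Continuous fun x => ∮ z in C(c, R), F x z := by
  unfold circleIntegral
  refine intervalIntegral.continuous_parametric_intervalIntegral_of_continuous' ?_ _ _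
  simp only [deriv_circleMap, smul_eq_mul]
  exact ((continuous_circleMap 0 R).comp continuous_snd).mul continuous_const |>.mul hF

theorem continuous_natCast_complex_iff {X : Type*} [TopologicalSpace X] {N : X → ℕ} :
    Continuous (fun x => (N x : ℂ)) ↔ Continuous N := by
  have hemb := isometry_ofReal.isEmbedding.comp Nat.isClosedEmbedding_coe_real.isEmbedding
  simpa [Function.comp_def] using (hemb.continuous_iff (f := N)).symm

theorem add_mul_sub_ne_zero_of_norm_sub_lt {a b : ℂ} {t : ℝ} (ht : t ∈ Set.Icc 0 1)
    (h : ‖b - a‖ < ‖a‖) : a + t * (b - a) ≠ 0 := by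
  intro h0
  have : ‖a‖ ≤ ‖b - a‖ :=
    calc ‖a‖ = ‖t * (b - a)‖ := by rw [← norm_neg (_ * _), ← eq_neg_of_add_eq_zero_left h0]
      _ ≤ ‖b - a‖ := by
        rw [norm_mul, norm_real, Real.norm_of_nonneg ht.1]
        exact mul_le_of_le_one_left (norm_nonneg _) ht.2
  exact h.not_ge this

theorem card_roots_filter_eq_of_norm_sub_lt (hR : 0 ≤ R) {f g : ℂ[X]}
    (h : ∀ z ∈ sphere c R, ‖f.eval z - g.eval z‖ < ‖g.eval z‖) :
    (f.roots.filter fun a => dist a c < R).card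
      = (g.roots.filter fun a => dist a c < R).card := by
  set H : unitInterval → ℂ[X] := fun t => g + C ((t : ℝ) : ℂ) * (f - g)
  have hH : ∀ t z, (H t).eval z = g.eval z + (t : ℝ) * (f.eval z - g.eval z) := by
    intro t z; simp [H]
  have hH' : ∀ t z, (H t).derivative.eval z
      = g.derivative.eval z + (t : ℝ) * (f.derivative.eval z - g.derivative.eval z) := by
    intro t z; simp [H]
  have hH_ne : ∀ t, ∀ z ∈ sphere c R, (H t).eval z ≠ 0 := fun t z hz => by
    rw [hH]
    exact add_mul_sub_ne_zero_of_norm_sub_lt t.2 (h z hz)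
  set N : unitInterval → ℕ := fun t => ((H t).roots.filter fun a => dist a c < R).card
  have hN : Continuous N := by
    rw [← continuous_natCast_complex_iff]
    have hN_eq : ∀ t, (N t : ℂ)
        = (2 * π * I)⁻¹ * ∮ z in C(c, R), (H t).derivative.eval z / (H t).eval z := fun t => by
      rw [circleIntegral_derivative_div_eq_card_roots hR _ (hH_ne t),
        inv_mul_cancel_left₀ (by simp [pi_ne_zero])]
    simp only [hN_eq]
    refine continuous_const.mul (continuous_circleIntegral ?_)
    simp only [hH, hH']
    refine Continuous.div (by fun_prop) (by fun_prop) fun q => ?_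
    rw [← hH]
    exact hH_ne q.1 _ (circleMap_mem_sphere c hR q.2)
  have h1 : H 1 = f := by simp [H]
  have h0 : H 0 = g := by simp [H]
  have hN10 := ((IsLocallyConstant.iff_continuous N).2 hN).apply_eq_of_preconnectedSpace 1 0
  simpa [N, h1, h0] using hN10

end

theorem Polynomial.norm_eval_sub_coeff_mul_pow_le {𝕜 : Type*} [NormedField 𝕜] {f : 𝕜[X]}
    {d k : ℕ} (hd : f.natDegree ≤ d) (hk : k ≤ d) (z : 𝕜) :
    ‖f.eval z - f.coeff k * z ^ k‖
      ≤ ∑ j ∈ (Finset.range (d + 1)).erase k, ‖f.coeff j‖ * ‖z‖ ^ j := by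
  rw [eval_eq_sum_range' (Nat.lt_succ_of_le hd),
    ← Finset.sum_erase_eq_sub (Finset.mem_range_succ_iff.2 hk)]
  refine (norm_sum_le _ _).trans_eq (Finset.sum_congr rfl fun j _ => ?_)
  rw [norm_mul, norm_pow]

theorem stmt_5_general (f : Polynomial ℂ) (d k : ℕ) (hd : f.natDegree = d)
    (hk : k ≤ d) (R : ℝ) (hR : 0 < R)
    (hdom : ∑ j ∈ (Finset.range (d + 1)).erase k, ‖f.coeff j‖ * R ^ j
        < ‖f.coeff k‖ * R ^ k) :
    (f.roots.filter fun z => ‖z‖ < R).card = k := by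
  have hαk : f.coeff k ≠ 0 := by
    rintro h
    simp only [h, norm_zero, zero_mul] at hdom
    exact hdom.not_ge (Finset.sum_nonneg fun j _ => by positivity)
  have hdominant : ∀ z ∈ sphere (0 : ℂ) R,
      ‖f.eval z - (C (f.coeff k) * X ^ k).eval z‖ < ‖(C (f.coeff k) * X ^ k).eval z‖ := by
    intro z hz
    rw [mem_sphere_zero_iff_norm] at hz
    simpa [hz] using (norm_eval_sub_coeff_mul_pow_le hd.le hk z).trans_lt (hz ▸ hdom)
  have hcount := card_roots_filter_eq_of_norm_sub_lt hR.le hdominant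
  simp only [dist_zero_right] at hcount
  rw [hcount, roots_C_mul_X_pow hαk, Multiset.nsmul_singleton,
    Multiset.filter_eq_self.2 fun a ha => by simp [Multiset.eq_of_mem_replicate ha, hR],
    Multiset.card_replicate]

theorem stmt_5 (f : Polynomial ℂ) (hf : f ≠ 0) (d k : ℕ) (hd : f.natDegree = d)
    (hk : k ≤ d) (R : ℝ) (hR : 0 < R)
    (hdom : ∑ j ∈ (Finset.range (d + 1)).erase k, ‖f.coeff j‖ * R ^ j
        < ‖f.coeff k‖ * R ^ k) :
    (f.roots.filter fun z => ‖z‖ < R).card = k :=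
  stmt_5_general f d k hd hk R hR hdom
end

section
/- Let f_m(q) = q^{2m+2} - c q^{2m+1} + 2(c-1) q^{m+1} - c q + 1 with |c| > 81/14 and m ≥ 2. Then f_m has exactly one root (counted with multiplicity) of absolute value less than 2^{-2/m}. -/
/-!
Write `f_m = g - c X` with `g = f_m + c X`. On the closed disc of radius `7/20` one has
`‖g‖ ≤ (7/20) ‖c‖` and `‖g'‖ ≤ (19/20) ‖c‖`, so `z ↦ g z / c` is a contraction of that disc. Its
unique fixed point is the unique root of `f_m` in the disc, and it is simple because
`f_m' = g' - c` does not vanish there. No root lies in the annulus `7/20 < ‖z‖ < 2^(-2/m)`: there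
`‖z‖^m < 1/4`, and the resulting bound on `‖g z‖` is smaller than `‖c z‖`.
-/

open Polynomial Metric Set
open scoped NNReal

section ContractionCount

variable {h : ℂ[X]} {c : ℂ} {r : ℝ} {κ : ℝ≥0}

theorem Polynomial.isRoot_sub_C_mul_X_iff {z : ℂ} :
    (h - C c * X).IsRoot z ↔ h.eval z = c * z := by
  rw [IsRoot.def, eval_sub, eval_mul, eval_C, eval_X, sub_eq_zero]

theorem Polynomial.isRoot_sub_C_mul_X_iff_eval_div_eq (hc : c ≠ 0) {z : ℂ} :
    (h - C c * X).IsRoot z ↔ h.eval z / c = z := by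
  rw [isRoot_sub_C_mul_X_iff, div_eq_iff hc, mul_comm]

theorem Polynomial.lipschitzOnWith_eval_div_closedBall (hc : c ≠ 0)
    (hderiv : ∀ z ∈ closedBall (0 : ℂ) r, ‖h.derivative.eval z‖ ≤ κ * ‖c‖) :
    LipschitzOnWith κ (fun z => h.eval z / c) (closedBall 0 r) := by
  refine (convex_closedBall 0 r).lipschitzOnWith_of_nnnorm_deriv_le
    (fun z _ => h.differentiableAt.div_const c) fun z hz => ?_
  rw [← NNReal.coe_le_coe, coe_nnnorm, deriv_div_const, Polynomial.deriv, norm_div,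
    div_le_iff₀ (norm_pos_iff.mpr hc)]
  exact hderiv z hz

theorem Polynomial.exists_mem_closedBall_isRoot_sub_C_mul_X (hκ : κ < 1) (hr : 0 ≤ r)
    (hc : c ≠ 0) (hmaps : ∀ z ∈ closedBall (0 : ℂ) r, ‖h.eval z‖ ≤ r * ‖c‖)
    (hderiv : ∀ z ∈ closedBall (0 : ℂ) r, ‖h.derivative.eval z‖ ≤ κ * ‖c‖) :
    ∃ z ∈ closedBall (0 : ℂ) r, (h - C c * X).IsRoot z := by
  have hmapsTo : MapsTo (fun z => h.eval z / c) (closedBall 0 r) (closedBall 0 r) := by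
    intro z hz
    rw [mem_closedBall_zero_iff, norm_div, div_le_iff₀ (norm_pos_iff.mpr hc)]
    exact hmaps z hz
  obtain ⟨z, hz, hfix, -⟩ := ContractingWith.exists_fixedPoint' isClosed_closedBall.isComplete
    hmapsTo ⟨hκ, (lipschitzOnWith_eval_div_closedBall hc hderiv).mapsToRestrict hmapsTo⟩
    (mem_closedBall_self hr) (edist_ne_top _ _)
  exact ⟨z, hz, (isRoot_sub_C_mul_X_iff_eval_div_eq hc).mpr hfix⟩

theorem Polynomial.eq_of_isRoot_sub_C_mul_X (hκ : κ < 1) (hc : c ≠ 0)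
    (hderiv : ∀ z ∈ closedBall (0 : ℂ) r, ‖h.derivative.eval z‖ ≤ κ * ‖c‖)
    {a b : ℂ} (ha : a ∈ closedBall (0 : ℂ) r) (hb : b ∈ closedBall (0 : ℂ) r)
    (hpa : (h - C c * X).IsRoot a) (hpb : (h - C c * X).IsRoot b) : a = b := by
  have hdist := (lipschitzOnWith_eval_div_closedBall hc hderiv).dist_le_mul a ha b hb
  rw [(isRoot_sub_C_mul_X_iff_eval_div_eq hc).mp hpa,
    (isRoot_sub_C_mul_X_iff_eval_div_eq hc).mp hpb] at hdist
  have : dist a b ≤ 0 := by nlinarith [dist_nonneg (x := a) (y := b), show (κ : ℝ) < 1 from hκ]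
  exact dist_le_zero.mp this

theorem Polynomial.not_isRoot_derivative_sub_C_mul_X (hκ : κ < 1) (hc : c ≠ 0)
    (hderiv : ∀ z ∈ closedBall (0 : ℂ) r, ‖h.derivative.eval z‖ ≤ κ * ‖c‖)
    {z : ℂ} (hz : z ∈ closedBall (0 : ℂ) r) : ¬ (h - C c * X).derivative.IsRoot z := by
  intro hroot
  have heq : h.derivative.eval z = c := by simpa [sub_eq_zero] using hroot
  have := hderiv z hz
  rw [heq] at this
  nlinarith [norm_pos_iff.mpr hc, show (κ : ℝ) < 1 from hκ]

theorem Polynomial.card_roots_filter_norm_le_eq_one (hκ : κ < 1) (hr : 0 ≤ r)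
    (hc : c ≠ 0) (hmaps : ∀ z ∈ closedBall (0 : ℂ) r, ‖h.eval z‖ ≤ r * ‖c‖)
    (hderiv : ∀ z ∈ closedBall (0 : ℂ) r, ‖h.derivative.eval z‖ ≤ κ * ‖c‖) :
    ((h - C c * X).roots.filter fun z => ‖z‖ ≤ r).card = 1 := by
  obtain ⟨a, ha, hpa⟩ := exists_mem_closedBall_isRoot_sub_C_mul_X hκ hr hc hmaps hderiv
  have hp0 : h - C c * X ≠ 0 := fun h0 =>
    not_isRoot_derivative_sub_C_mul_X hκ hc hderiv ha (by simp [h0])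
  have hsimple : (h - C c * X).rootMultiplicity a = 1 := by
    have hpos := (rootMultiplicity_pos hp0).mpr hpa
    have hnot_gt := (one_lt_rootMultiplicity_iff_isRoot hp0).not.mpr
      fun h' => not_isRoot_derivative_sub_C_mul_X hκ hc hderiv ha h'.2
    omega
  have hunique : ∀ b ∈ (h - C c * X).roots.filter fun z => ‖z‖ ≤ r, a = b := by
    intro b hb
    rw [Multiset.mem_filter, mem_roots hp0] at hb
    exact eq_of_isRoot_sub_C_mul_X hκ hc hderiv ha (mem_closedBall_zero_iff.mpr hb.2) hpa hb.1
  rw [← Multiset.count_eq_card.mpr hunique,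
    Multiset.count_filter_of_pos (p := fun z => ‖z‖ ≤ r) (mem_closedBall_zero_iff.mp ha),
    count_roots, hsimple]

end ContractionCount

-- `f_m + c X`, the part of `f_m` that is small on the disc of radius `7/20`.
noncomputable def fmAddCX (c : ℂ) (m : ℕ) : ℂ[X] :=
  X ^ (2 * m + 2) - C c * X ^ (2 * m + 1) + C (2 * (c - 1)) * X ^ (m + 1) + 1

theorem norm_eval_fmAddCX_le (c z : ℂ) (m : ℕ) :
    ‖(fmAddCX c m).eval z‖ ≤
      ‖z‖ ^ (2 * m + 2) + ‖c‖ * ‖z‖ ^ (2 * m + 1) + 2 * (‖c‖ + 1) * ‖z‖ ^ (m + 1) + 1 := by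
  have hc1 : ‖c - 1‖ ≤ ‖c‖ + 1 := by simpa using norm_sub_le c 1
  simp only [fmAddCX, eval_add, eval_sub, eval_mul, eval_pow, eval_C, eval_X, eval_one]
  refine (norm_add_le _ _).trans (add_le_add ((norm_add_le _ _).trans
    (add_le_add ((norm_sub_le _ _).trans ?_) ?_)) (by simp))
  · simp
  · simp only [norm_mul, norm_pow, Complex.norm_ofNat]
    gcongr

theorem eval_derivative_fmAddCX (c z : ℂ) (m : ℕ) :
    (fmAddCX c m).derivative.eval z = (2 * m + 2) * z ^ (2 * m + 1)
      - c * ((2 * m + 1) * z ^ (2 * m)) + 2 * (c - 1) * ((m + 1) * z ^ m) := by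
  simp only [fmAddCX, derivative_add, derivative_sub, derivative_mul, derivative_X_pow,
    derivative_C, derivative_one, zero_mul, zero_add, add_zero, eval_add, eval_sub, eval_mul,
    eval_C, eval_pow, eval_X, Nat.add_sub_cancel,
    show 2 * m + 2 - 1 = 2 * m + 1 by omega]
  push_cast
  ring

theorem norm_eval_derivative_fmAddCX_le (c z : ℂ) (m : ℕ) :
    ‖(fmAddCX c m).derivative.eval z‖ ≤
      (2 * m + 2) * ‖z‖ ^ (2 * m + 1) + ‖c‖ * ((2 * m + 1) * ‖z‖ ^ (2 * m))
        + 2 * (‖c‖ + 1) * ((m + 1) * ‖z‖ ^ m) := by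
  have hc1 : ‖c - 1‖ ≤ ‖c‖ + 1 := by simpa using norm_sub_le c 1
  rw [eval_derivative_fmAddCX]
  refine (norm_add_le _ _).trans (add_le_add ((norm_sub_le _ _).trans (le_of_eq ?_)) ?_)
  · simp only [norm_mul, norm_pow]
    norm_cast
  · simp only [norm_mul, norm_pow, Complex.norm_ofNat]
    norm_cast
    gcongr

theorem antitone_succ_mul_pow {r : ℝ} (hr0 : 0 ≤ r) (hr : r ≤ 1 / 2) :
    Antitone fun n : ℕ => ((n : ℝ) + 1) * r ^ n := by
  refine antitone_nat_of_succ_le fun n => ?_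
  have hn : (0 : ℝ) ≤ n := n.cast_nonneg
  have : ((n : ℝ) + 1 + 1) * r ≤ (n : ℝ) + 1 := by nlinarith
  push_cast
  rw [pow_succ, ← mul_assoc, mul_right_comm]
  exact mul_le_mul_of_nonneg_right this (pow_nonneg hr0 n)

theorem succ_mul_pow_le {r t : ℝ} (ht0 : 0 ≤ t) (htr : t ≤ r) (hr : r ≤ 1 / 2) {j n : ℕ}
    (hjn : j ≤ n) : ((n : ℝ) + 1) * t ^ n ≤ ((j : ℝ) + 1) * r ^ j :=
  calc ((n : ℝ) + 1) * t ^ n ≤ ((n : ℝ) + 1) * r ^ n := by gcongr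
    _ ≤ ((j : ℝ) + 1) * r ^ j := antitone_succ_mul_pow (ht0.trans htr) hr hjn

theorem fm_mapsTo_bound {C t : ℝ} {m : ℕ} (hm : 2 ≤ m) (hC : 81 / 14 < C) (ht0 : 0 ≤ t)
    (ht : t ≤ 7 / 20) :
    t ^ (2 * m + 2) + C * t ^ (2 * m + 1) + 2 * (C + 1) * t ^ (m + 1) + 1 ≤ 7 / 20 * C := by
  have bound : ∀ k j, j ≤ k → t ^ k ≤ (7 / 20) ^ j := fun k j hjk =>
    (pow_le_pow_left₀ ht0 ht k).trans (pow_le_pow_of_le_one (by norm_num) (by norm_num) hjk)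
  have h6 := bound (2 * m + 2) 6 (by omega)
  have h5 := bound (2 * m + 1) 5 (by omega)
  have h3 := bound (m + 1) 3 (by omega)
  norm_num at h6 h5 h3
  nlinarith

theorem fm_derivative_bound {C t : ℝ} {m : ℕ} (hm : 2 ≤ m) (hC : 81 / 14 < C) (ht0 : 0 ≤ t)
    (ht : t ≤ 7 / 20) :
    (2 * m + 2) * t ^ (2 * m + 1) + C * ((2 * m + 1) * t ^ (2 * m))
      + 2 * (C + 1) * ((m + 1) * t ^ m) ≤ 19 / 20 * C := by
  have bound : ∀ n j : ℕ, j ≤ n → ((n : ℝ) + 1) * t ^ n ≤ ((j : ℝ) + 1) * (7 / 20) ^ j :=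
    fun n j hjn => succ_mul_pow_le ht0 ht (by norm_num) hjn
  have h5 := bound (2 * m + 1) 5 (by omega)
  have h4 := bound (2 * m) 4 (by omega)
  have h2 := bound m 2 hm
  push_cast at h5 h4
  norm_num at h5 h4 h2
  nlinarith

theorem fm_annulus_bound_of_le_half {C t : ℝ} (hC : 81 / 14 < C) (ht : 7 / 20 < t)
    (ht2 : t ≤ 1 / 2) : t ^ 6 + C * t ^ 5 + 2 * (C + 1) * t ^ 3 + 1 < C * t := by
  have hgap : 0 < t - 2 * t ^ 3 - t ^ 5 := by
    nlinarith [pow_le_pow_left₀ (by linarith) ht2 2, pow_le_pow_left₀ (by linarith) ht2 4,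
      pow_pos (show 0 < t by linarith) 2]
  have hpoly : 1 + 2 * t ^ 3 + t ^ 6 ≤ 81 / 14 * (t - 2 * t ^ 3 - t ^ 5) := by
    nlinarith [mul_nonneg (mul_nonneg (sub_nonneg.2 ht2) (sub_nonneg.2 ht.le)) (sq_nonneg t),
      mul_nonneg (sub_nonneg.2 ht2) (pow_nonneg (show 0 ≤ t by linarith) 3),
      mul_nonneg (sub_nonneg.2 ht2) (pow_nonneg (show 0 ≤ t by linarith) 4)]
  nlinarith [mul_pos (sub_pos.2 hC) hgap]

-- At `t = 1/2` this becomes an equality for `C = 81/14`: this is where the constant comes from.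
theorem fm_annulus_bound_of_half_lt {C t : ℝ} (hC : 81 / 14 < C) (ht : 1 / 2 < t)
    (ht1 : t < 1) :
    t ^ 2 / 16 + C * t / 16 + (C + 1) * t / 2 + 1 < C * t := by
  nlinarith [mul_pos (sub_pos.2 ht) (show (0 : ℝ) < 32 - t by linarith),
    mul_pos (sub_pos.2 hC) (show (0 : ℝ) < t by linarith)]

theorem fm_annulus_bound {C s t : ℝ} (hC : 81 / 14 < C) (ht : 7 / 20 < t) (ht1 : t < 1)
    (hs0 : 0 ≤ s) (hst : s ≤ t ^ 2) (hs : s < 1 / 4) :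
    s ^ 2 * t ^ 2 + C * (s ^ 2 * t) + 2 * (C + 1) * (s * t) + 1 < C * t := by
  have ht0 : 0 ≤ t := by linarith
  have hC0 : 0 ≤ C := by linarith
  rcases le_or_gt t (1 / 2) with ht2 | ht2
  · have hs2 : s ^ 2 ≤ (t ^ 2) ^ 2 := pow_le_pow_left₀ hs0 hst 2
    have := fm_annulus_bound_of_le_half hC ht ht2
    calc s ^ 2 * t ^ 2 + C * (s ^ 2 * t) + 2 * (C + 1) * (s * t) + 1
        ≤ (t ^ 2) ^ 2 * t ^ 2 + C * ((t ^ 2) ^ 2 * t) + 2 * (C + 1) * (t ^ 2 * t) + 1 := by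
          gcongr
      _ = t ^ 6 + C * t ^ 5 + 2 * (C + 1) * t ^ 3 + 1 := by ring
      _ < C * t := this
  · have hs2 : s ^ 2 ≤ (1 / 4) ^ 2 := pow_le_pow_left₀ hs0 hs.le 2
    have := fm_annulus_bound_of_half_lt hC ht2 ht1
    calc s ^ 2 * t ^ 2 + C * (s ^ 2 * t) + 2 * (C + 1) * (s * t) + 1
        ≤ (1 / 4) ^ 2 * t ^ 2 + C * ((1 / 4) ^ 2 * t) + 2 * (C + 1) * (1 / 4 * t) + 1 := by
          gcongr
      _ < C * t := by linarith

theorem norm_le_of_isRoot_fmAddCX_sub {c z : ℂ} {m : ℕ} (hm : 2 ≤ m) (hc : 81 / 14 < ‖c‖)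
    (hz : (fmAddCX c m - C c * X).IsRoot z) (hzm : ‖z‖ ^ m < 1 / 4) : ‖z‖ ≤ 7 / 20 := by
  by_contra! ht
  have ht1 : ‖z‖ < 1 := by
    by_contra! h1
    exact (one_le_pow₀ (n := m) h1).not_gt (hzm.trans (by norm_num))
  have hst : ‖z‖ ^ m ≤ ‖z‖ ^ 2 := pow_le_pow_of_le_one (norm_nonneg z) ht1.le hm
  have key := norm_eval_fmAddCX_le c z m
  rw [isRoot_sub_C_mul_X_iff.mp hz, norm_mul] at key
  refine (fm_annulus_bound hc ht ht1 (by positivity) hst hzm).not_ge (key.trans_eq ?_)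
  ring

theorem lt_two_rpow_neg_two_div_iff {x : ℝ} {m : ℕ} (hx : 0 ≤ x) (hm : m ≠ 0) :
    x < (2 : ℝ) ^ (-(2 : ℝ) / m) ↔ x ^ m < 1 / 4 := by
  have hRm : ((2 : ℝ) ^ (-(2 : ℝ) / m)) ^ m = 1 / 4 := by
    rw [← Real.rpow_natCast, ← Real.rpow_mul (by norm_num),
      div_mul_cancel₀ _ (Nat.cast_ne_zero.mpr hm)]
    norm_num
  rw [← hRm, pow_lt_pow_iff_left₀ hx (by positivity) hm]

theorem stmt_6 (c : ℂ) (hc : 81 / 14 < ‖c‖) (m : ℕ) (hm : 2 ≤ m) :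
    (((Polynomial.X ^ (2 * m + 2) - Polynomial.C c * Polynomial.X ^ (2 * m + 1)
          + Polynomial.C (2 * (c - 1)) * Polynomial.X ^ (m + 1)
          - Polynomial.C c * Polynomial.X + 1 : Polynomial ℂ)).roots.filter
        fun z => ‖z‖ < (2 : ℝ) ^ (-(2 : ℝ) / m)).card = 1 := by
  have hc0 : c ≠ 0 := norm_pos_iff.mp (by linarith)
  have hf : (X ^ (2 * m + 2) - C c * X ^ (2 * m + 1) + C (2 * (c - 1)) * X ^ (m + 1)
      - C c * X + 1 : ℂ[X]) = fmAddCX c m - C c * X := by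
    rw [fmAddCX]; ring
  have hdisk : ∀ z ∈ (fmAddCX c m - C c * X).roots,
      ‖z‖ < (2 : ℝ) ^ (-(2 : ℝ) / m) ↔ ‖z‖ ≤ 7 / 20 := by
    intro z hz
    rw [lt_two_rpow_neg_two_div_iff (norm_nonneg z) (by omega)]
    refine ⟨norm_le_of_isRoot_fmAddCX_sub hm hc (isRoot_of_mem_roots hz), fun hz7 => ?_⟩
    calc ‖z‖ ^ m ≤ (7 / 20) ^ m := pow_le_pow_left₀ (norm_nonneg z) hz7 m
      _ ≤ (7 / 20) ^ 2 := pow_le_pow_of_le_one (by norm_num) (by norm_num) hm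
      _ < 1 / 4 := by norm_num
  rw [hf, Multiset.filter_congr hdisk]
  exact card_roots_filter_norm_le_eq_one (κ := 19 / 20) (by norm_num) (by norm_num) hc0
    (fun z hz => (norm_eval_fmAddCX_le c z m).trans <| fm_mapsTo_bound hm hc (norm_nonneg z)
      (mem_closedBall_zero_iff.mp hz))
    (fun z hz => (norm_eval_derivative_fmAddCX_le c z m).trans <| fm_derivative_bound hm hc
      (norm_nonneg z) (mem_closedBall_zero_iff.mp hz))
end

section
/- Let f_m(q) = q^{2m+2} - c q^{2m+1} + 2(c-1) q^{m+1} - c q + 1 with |c| ≥ 4 and m ≥ 4. Then every root of f_m with absolute value less than 2^{-2/m} in fact has absolute value less than 2/|c|. -/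
/-!
The polynomial factors as `f_m(q) = c q (q^m - 1)^2 - (q^{m+1} - 1)^2`, so at a root, with
`x = |q|` and `s = x^m`, the triangle inequality gives `|c| x (1 - s)^2 ≤ (1 + s x)^2`.
The hypothesis `|q| < 2^{-2/m}` means `s < 1/4`, which already forces `|c| x ≤ 25/9`, i.e.
`x ≤ 7/10`. Since `m ≥ 4` we have `s ≤ x^4`, so each bound on `x` improves the bound on `s`
and hence on `|c| x`: two more rounds give `x ≤ 3/5` and then `|c| x < 2`.
-/

lemma pow_lt_of_lt_rpow_div {x b a : ℝ} {m : ℕ} (hx : 0 ≤ x) (hb : 0 ≤ b) (hm : m ≠ 0)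
    (h : x < b ^ (a / m)) : x ^ m < b ^ a := by
  calc x ^ m < (b ^ (a / m)) ^ m := pow_lt_pow_left₀ h hx hm
    _ = b ^ a := by
      rw [← Real.rpow_natCast, ← Real.rpow_mul hb, div_mul_cancel₀]
      exact_mod_cast hm

lemma norm_mul_one_sub_norm_pow_sq_le {𝕜 : Type*} [NormedField 𝕜] {c q : 𝕜} {m : ℕ}
    (h : c * q * (q ^ m - 1) ^ 2 = (q ^ (m + 1) - 1) ^ 2) (hq : ‖q‖ ^ m ≤ 1) :
    ‖c‖ * ‖q‖ * (1 - ‖q‖ ^ m) ^ 2 ≤ (1 + ‖q‖ ^ m * ‖q‖) ^ 2 := by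
  have hnorm : ‖c‖ * ‖q‖ * ‖q ^ m - 1‖ ^ 2 = ‖q ^ (m + 1) - 1‖ ^ 2 := by
    simpa only [norm_mul, norm_pow] using congrArg norm h
  have hlower : 1 - ‖q‖ ^ m ≤ ‖q ^ m - 1‖ := by
    simpa only [norm_one, norm_pow, norm_sub_rev] using norm_sub_norm_le (1 : 𝕜) (q ^ m)
  have hupper : ‖q ^ (m + 1) - 1‖ ≤ 1 + ‖q‖ ^ m * ‖q‖ := by
    simpa only [norm_one, norm_mul, norm_pow, pow_succ, add_comm] using norm_sub_le (q ^ (m + 1)) 1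
  calc ‖c‖ * ‖q‖ * (1 - ‖q‖ ^ m) ^ 2 ≤ ‖c‖ * ‖q‖ * ‖q ^ m - 1‖ ^ 2 := by
        gcongr
    _ = ‖q ^ (m + 1) - 1‖ ^ 2 := hnorm
    _ ≤ (1 + ‖q‖ ^ m * ‖q‖) ^ 2 := by gcongr

lemma mul_le_of_mul_one_sub_sq_le {C x s X S : ℝ} (hC : 0 ≤ C) (hx : 0 ≤ x) (hxX : x ≤ X)
    (hs : 0 ≤ s) (hsS : s ≤ S) (hS : S < 1) (h : C * x * (1 - s) ^ 2 ≤ (1 + s * x) ^ 2) :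
    C * x ≤ ((1 + S * X) / (1 - S)) ^ 2 := by
  rw [div_pow, le_div_iff₀ (by nlinarith)]
  calc C * x * (1 - S) ^ 2 ≤ C * x * (1 - s) ^ 2 := by gcongr
    _ ≤ (1 + s * x) ^ 2 := h
    _ ≤ (1 + S * X) ^ 2 := by gcongr; linarith

lemma mul_lt_two_of_mul_one_sub_pow_sq_le {C x : ℝ} {m : ℕ} (hC : 4 ≤ C) (hx : 0 ≤ x)
    (hm : 4 ≤ m) (hs : x ^ m ≤ 1 / 4) (h : C * x * (1 - x ^ m) ^ 2 ≤ (1 + x ^ m * x) ^ 2) :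
    C * x < 2 := by
  have hx1 : x ≤ 1 := ((pow_lt_one_iff_of_nonneg hx (n := m) (by omega)).1 (by linarith)).le
  have hsx : x ^ m ≤ x ^ 4 := pow_le_pow_of_le_one hx hx1 hm
  have hs0 : 0 ≤ x ^ m := by positivity
  have hx₁ : x ≤ 7 / 10 := by
    have := mul_le_of_mul_one_sub_sq_le (by linarith) hx hx1 hs0 hs (by norm_num) h
    nlinarith
  have hx₂ : x ≤ 3 / 5 := by
    have := mul_le_of_mul_one_sub_sq_le (by linarith) hx hx₁ hs0
      (hsx.trans (pow_le_pow_left₀ hx hx₁ 4)) (by norm_num) h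
    nlinarith
  have := mul_le_of_mul_one_sub_sq_le (by linarith) hx hx₂ hs0
    (hsx.trans (pow_le_pow_left₀ hx hx₂ 4)) (by norm_num) h
  linarith

theorem stmt_7 (c : ℂ) (hc : 4 ≤ ‖c‖) (m : ℕ) (hm : 4 ≤ m) (q : ℂ)
    (hroot : q ^ (2 * m + 2) - c * q ^ (2 * m + 1) + 2 * (c - 1) * q ^ (m + 1)
        - c * q + 1 = 0)
    (hsmall : ‖q‖ < (2 : ℝ) ^ (-(2 : ℝ) / m)) :
    ‖q‖ < 2 / ‖c‖ := by
  have hqm : ‖q‖ ^ m ≤ 1 / 4 := by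
    have := pow_lt_of_lt_rpow_div (norm_nonneg q) zero_le_two (by omega) hsmall
    norm_num at this
    exact this.le
  have hfactor : c * q * (q ^ m - 1) ^ 2 = (q ^ (m + 1) - 1) ^ 2 := by
    linear_combination -hroot
  have hkey := norm_mul_one_sub_norm_pow_sq_le hfactor (hqm.trans (by norm_num))
  rw [lt_div_iff₀ (by linarith), mul_comm]
  exact mul_lt_two_of_mul_one_sub_pow_sq_le hc (norm_nonneg q) hm hqm hkey
end

section
/- Let κ > 0 and let x > 0, y = √(κ² + x²). Then for all l > 0, the quantity g̃(x) := [(κ² + x² + y²) sinh(x) + 2κy cosh(x)] sinh(lx) - |(κ² − x² − y²) sin(y) − 2κx cos(y)| · |sin(ly)| is strictly positive. In particular, [(κ²+x²+y²) sinh x + 2κy cosh x] sinh(lx) ± [(κ²−x²−y²) sin y − 2κx cos y] sin(ly) > 0. -/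
/-!
With `y² = κ² + x²` the coefficients simplify to `κ² + x² + y² = 2y²` and `|κ² - x² - y²| = 2x²`.
The bounds `sinh t > t`, `cosh t > 1` give the hyperbolic term a lower bound `2y(xy + κ) · lx`,
while `|sin t| ≤ t`, `|cos t| ≤ 1` bound the trigonometric term by `2x(xy + κ) · ly`:
the same number, and the first bound is strict.
-/

open Real

lemma mul_add_lt_mul_sinh_add_mul_cosh {c d x : ℝ} (hc : 0 < c) (hd : 0 ≤ d) (hx : 0 < x) :
    c * x + d < c * sinh x + d * cosh x := by
  have hsinh := mul_lt_mul_of_pos_left (self_lt_sinh_iff.2 hx) hc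
  have hcosh := mul_le_mul_of_nonneg_left (one_lt_cosh.2 hx.ne').le hd
  linarith

lemma abs_mul_sin_sub_mul_cos_le (a b t : ℝ) : |a * sin t - b * cos t| ≤ |a| * |t| + |b| :=
  calc |a * sin t - b * cos t| ≤ |a| * |sin t| + |b| * |cos t| := by
        simpa only [abs_mul] using abs_sub (a * sin t) (b * cos t)
    _ ≤ |a| * |t| + |b| * 1 :=
        add_le_add (mul_le_mul_of_nonneg_left abs_sin_le_abs (abs_nonneg a))
          (mul_le_mul_of_nonneg_left (abs_cos_le_one t) (abs_nonneg b))
    _ = |a| * |t| + |b| := by ring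

theorem abs_mul_abs_sin_lt_of_sq_eq {κ l x y : ℝ} (hκ : 0 ≤ κ) (hl : 0 < l) (hx : 0 < x)
    (hy : 0 ≤ y) (hxy : y ^ 2 = κ ^ 2 + x ^ 2) :
    |(κ ^ 2 - x ^ 2 - y ^ 2) * sin y - 2 * κ * x * cos y| * |sin (l * y)|
      < ((κ ^ 2 + x ^ 2 + y ^ 2) * sinh x + 2 * κ * y * cosh x) * sinh (l * x) := by
  have htrig : |(κ ^ 2 - x ^ 2 - y ^ 2) * sin y - 2 * κ * x * cos y| ≤ 2 * x * (x * y + κ) := by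
    have hcoeff : |κ ^ 2 - x ^ 2 - y ^ 2| = 2 * x ^ 2 := by
      rw [show κ ^ 2 - x ^ 2 - y ^ 2 = -(2 * x ^ 2) by linarith, abs_neg,
        abs_of_nonneg (by positivity)]
    have := abs_mul_sin_sub_mul_cos_le (κ ^ 2 - x ^ 2 - y ^ 2) (2 * κ * x) y
    rw [hcoeff, abs_of_nonneg hy, abs_of_nonneg (by positivity : 0 ≤ 2 * κ * x)] at this
    linarith
  have hsin : |sin (l * y)| ≤ l * y :=
    abs_sin_le_abs.trans_eq (abs_of_nonneg (by positivity))
  calc |(κ ^ 2 - x ^ 2 - y ^ 2) * sin y - 2 * κ * x * cos y| * |sin (l * y)|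
      ≤ 2 * x * (x * y + κ) * (l * y) := mul_le_mul htrig hsin (abs_nonneg _) (by positivity)
    _ = ((κ ^ 2 + x ^ 2 + y ^ 2) * x + 2 * κ * y) * (l * x) := by
        linear_combination (l * x ^ 2) * hxy
    _ < ((κ ^ 2 + x ^ 2 + y ^ 2) * sinh x + 2 * κ * y * cosh x) * sinh (l * x) :=
        mul_lt_mul'' (mul_add_lt_mul_sinh_add_mul_cosh (by positivity) (by positivity) hx)
          (self_lt_sinh_iff.2 (by positivity)) (by positivity) (by positivity)

theorem stmt_13 (κ l x y : ℝ) (hκ : 0 < κ) (hl : 0 < l) (hx : 0 < x)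
    (hy : y = Real.sqrt (κ ^ 2 + x ^ 2)) :
    0 < ((κ ^ 2 + x ^ 2 + y ^ 2) * Real.sinh x + 2 * κ * y * Real.cosh x) * Real.sinh (l * x)
        - |(κ ^ 2 - x ^ 2 - y ^ 2) * Real.sin y - 2 * κ * x * Real.cos y| * |Real.sin (l * y)| ∧
    0 < ((κ ^ 2 + x ^ 2 + y ^ 2) * Real.sinh x + 2 * κ * y * Real.cosh x) * Real.sinh (l * x)
        + ((κ ^ 2 - x ^ 2 - y ^ 2) * Real.sin y - 2 * κ * x * Real.cos y) * Real.sin (l * y) ∧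
    0 < ((κ ^ 2 + x ^ 2 + y ^ 2) * Real.sinh x + 2 * κ * y * Real.cosh x) * Real.sinh (l * x)
        - ((κ ^ 2 - x ^ 2 - y ^ 2) * Real.sin y - 2 * κ * x * Real.cos y) * Real.sin (l * y) := by
  have hy0 : 0 ≤ y := hy ▸ sqrt_nonneg _
  have hxy : y ^ 2 = κ ^ 2 + x ^ 2 := hy ▸ sq_sqrt (by positivity)
  have key := abs_mul_abs_sin_lt_of_sq_eq hκ.le hl hx hy0 hxy
  have hprod := abs_lt.1 ((abs_mul _ _).trans_lt key)
  exact ⟨sub_pos.2 key, by linarith [hprod.1], by linarith [hprod.2]⟩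
end

section
/- Let κ > 0, l > 0, x > 0 and y = √(κ² + x²). Then 4[y²(y²+κ²) sinh(x(l+2)) + 2κy³ cosh(x(l+2))] sinh(lx) + 4[x²(x²−κ²) sin(y(l+2)) + 2κx³ cos(y(l+2))] sin(ly) > 4 l(l+2) x² y² κ² + 8 l x y κ³ > 0. -/
/-! Replace `sinh t, cosh t` by their lower bounds `t, 1` and `sin t, cos t` by their bounds
`|t|, 1`; what survives is a polynomial inequality which, after `y² = κ² + x²`, is an identity
with the right-hand side. -/

open Real

lemma mul_add_mul_lt_mul_sinh_add_mul_cosh_mul_sinh {a b t s : ℝ} (ha : 0 ≤ a) (hb : 0 < b)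
    (ht : 0 < t) (hs : 0 < s) :
    (a * t + b) * s < (a * sinh t + b * cosh t) * sinh s := by
  have hbracket : a * t + b < a * sinh t + b * cosh t :=
    add_lt_add_of_le_of_lt (mul_le_mul_of_nonneg_left (self_le_sinh_iff.mpr ht.le) ha)
      (lt_mul_of_one_lt_right hb (one_lt_cosh.mpr ht.ne'))
  have hsinh : s < sinh s := self_lt_sinh_iff.mpr hs
  calc (a * t + b) * s < (a * sinh t + b * cosh t) * s := by gcongr
    _ < (a * sinh t + b * cosh t) * sinh s := by gcongr

lemma abs_mul_sin_add_mul_cos_mul_sin_le {a A b t s : ℝ} (ha : |a| ≤ A) (hb : 0 ≤ b)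
    (ht : 0 ≤ t) (hs : 0 ≤ s) :
    |(a * sin t + b * cos t) * sin s| ≤ (A * t + b) * s := by
  have hsin_t : |sin t| ≤ t := abs_sin_le_abs.trans (abs_of_nonneg ht).le
  have hsin_s : |sin s| ≤ s := abs_sin_le_abs.trans (abs_of_nonneg hs).le
  have hbracket : |a * sin t + b * cos t| ≤ A * t + b :=
    calc |a * sin t + b * cos t| ≤ |a| * |sin t| + b * |cos t| := by
          simpa only [abs_mul, abs_of_nonneg hb] using abs_add_le (a * sin t) (b * cos t)
      _ ≤ A * t + b * 1 := by
          gcongr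
          · exact (abs_nonneg a).trans ha
          · exact abs_cos_le_one t
      _ = A * t + b := by ring
  rw [abs_mul]
  exact mul_le_mul hbracket hsin_s (abs_nonneg _) ((abs_nonneg _).trans hbracket)

theorem stmt_14 (κ l x y : ℝ) (hκ : 0 < κ) (hl : 0 < l) (hx : 0 < x)
    (hy : y = Real.sqrt (κ ^ 2 + x ^ 2)) :
    4 * (y ^ 2 * (y ^ 2 + κ ^ 2) * Real.sinh (x * (l + 2))
          + 2 * κ * y ^ 3 * Real.cosh (x * (l + 2))) * Real.sinh (l * x)
      + 4 * (x ^ 2 * (x ^ 2 - κ ^ 2) * Real.sin (y * (l + 2))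
          + 2 * κ * x ^ 3 * Real.cos (y * (l + 2))) * Real.sin (l * y)
      > 4 * l * (l + 2) * x ^ 2 * y ^ 2 * κ ^ 2 + 8 * l * x * y * κ ^ 3 ∧
    4 * l * (l + 2) * x ^ 2 * y ^ 2 * κ ^ 2 + 8 * l * x * y * κ ^ 3 > 0 := by
  have hy0 : 0 < y := hy ▸ sqrt_pos.mpr (by positivity)
  have hy2 : y ^ 2 = κ ^ 2 + x ^ 2 := by rw [hy, sq_sqrt (by positivity)]
  have hcoeff : |x ^ 2 * (x ^ 2 - κ ^ 2)| ≤ x ^ 2 * (x ^ 2 + κ ^ 2) := by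
    rw [abs_mul, abs_sq]
    gcongr
    exact (abs_sub (x ^ 2) (κ ^ 2)).trans_eq (by rw [abs_sq, abs_sq])
  have hsinh_term := mul_add_mul_lt_mul_sinh_add_mul_cosh_mul_sinh
    (a := y ^ 2 * (y ^ 2 + κ ^ 2)) (b := 2 * κ * y ^ 3) (t := x * (l + 2)) (s := l * x)
    (by positivity) (by positivity) (by positivity) (by positivity)
  have hsin_term := neg_le_of_abs_le <| abs_mul_sin_add_mul_cos_mul_sin_le
    (b := 2 * κ * x ^ 3) (t := y * (l + 2)) (s := l * y)
    hcoeff (by positivity) (by positivity) (by positivity)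
  refine ⟨?_, by positivity⟩
  linear_combination 4 * hsinh_term + 4 * hsin_term
    - (4 * l * (l + 2) * x ^ 2 * y ^ 2 + 8 * κ * l * x * y) * hy2
end

section
/- Let a, b ∈ ℂ and θ ∈ ℝ, and let λ = a cos θ + w where w is either complex square root of b² − a² sin² θ. Then λ · (a cos θ − w) = a² − b², so the product of the two values λ_±(θ) is independent of θ; moreover if |a+b| ≤ 1 and |a−b| ≤ 1 then |λ_±(θ)| ≤ 1 for all θ. -/
/-!
The two values `a cos θ ± w` are the eigenvalues of
`M = [[a cos θ, b - a sin θ], [b + a sin θ, a cos θ]] = a R_θ + b J`, where `R_θ` is the rotation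
by `θ` and `J` swaps the coordinates. Since `R_θᵀ J = J R_θ` is a reflection `K`,
`M* M = (|a|² + |b|²) I + 2 Re(a b̄) K`, so the singular values of `M` are `|a + b|` and `|a - b|`,
and every eigenvalue of `M` is bounded by the larger of the two.
-/

open Complex ComplexConjugate

section RotationReflection

variable (a b x y : ℂ) {s c : ℝ}

lemma normSq_rotation_add_reflection_apply (hsc : s ^ 2 + c ^ 2 = 1) :
    normSq (a * c * x + (b - a * s) * y) + normSq ((b + a * s) * x + a * c * y) =
      (normSq a + normSq b) * (normSq x + normSq y) +
        2 * (a * conj b).re * (s * (normSq x - normSq y) + 2 * c * (x * conj y).re) := by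
  simp only [normSq_apply, add_re, add_im, mul_re, mul_im, sub_re, sub_im, ofReal_re, ofReal_im,
    conj_re, conj_im]
  linear_combination (a.re ^ 2 + a.im ^ 2) * (x.re ^ 2 + x.im ^ 2 + y.re ^ 2 + y.im ^ 2) * hsc

/-- The left-hand side is the quadratic form of the reflection `[[s, c], [c, -s]]`, whose eigenvalues are `±1`. -/
lemma abs_reflection_quadForm_le (hsc : s ^ 2 + c ^ 2 = 1) :
    |s * (normSq x - normSq y) + 2 * c * (x * conj y).re| ≤ normSq x + normSq y := by
  have hre : (x * conj y).re * (x * conj y).re ≤ normSq x * normSq y := by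
    simpa using re_sq_le_normSq (x * conj y)
  refine abs_le_of_sq_le_sq ?_ (add_nonneg (normSq_nonneg x) (normSq_nonneg y))
  nlinarith [sq_nonneg (s * (2 * (x * conj y).re) - c * (normSq x - normSq y))]

lemma normSq_rotation_add_reflection_apply_le {K : ℝ} (hsc : s ^ 2 + c ^ 2 = 1)
    (hadd : ‖a + b‖ ≤ K) (hsub : ‖a - b‖ ≤ K) :
    normSq (a * c * x + (b - a * s) * y) + normSq ((b + a * s) * x + a * c * y) ≤
      K ^ 2 * (normSq x + normSq y) := by
  rw [normSq_rotation_add_reflection_apply a b x y hsc]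
  set r := (a * conj b).re
  set Q := s * (normSq x - normSq y) + 2 * c * (x * conj y).re
  have hQ : |Q| ≤ normSq x + normSq y := abs_reflection_quadForm_le x y hsc
  have hplus : normSq a + normSq b + 2 * r ≤ K ^ 2 := by
    rw [← normSq_add, ← Complex.sq_norm]
    exact pow_le_pow_left₀ (norm_nonneg _) hadd 2
  have hminus : normSq a + normSq b - 2 * r ≤ K ^ 2 := by
    rw [← normSq_sub, ← Complex.sq_norm]
    exact pow_le_pow_left₀ (norm_nonneg _) hsub 2
  have hrQ : r * Q ≤ |r| * (normSq x + normSq y) :=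
    calc r * Q ≤ |r| * |Q| := by rw [← abs_mul]; exact le_abs_self _
      _ ≤ |r| * (normSq x + normSq y) := by gcongr
  have hN : 0 ≤ normSq x + normSq y := add_nonneg (normSq_nonneg x) (normSq_nonneg y)
  cases abs_cases r <;> nlinarith

lemma norm_le_of_rotation_add_reflection_eigenvector {K : ℝ} {l : ℂ} (hsc : s ^ 2 + c ^ 2 = 1)
    (hadd : ‖a + b‖ ≤ K) (hsub : ‖a - b‖ ≤ K)
    (hx : a * c * x + (b - a * s) * y = l * x) (hy : (b + a * s) * x + a * c * y = l * y)
    (hxy : x ≠ 0 ∨ y ≠ 0) :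
    ‖l‖ ≤ K := by
  have hK : 0 ≤ K := (norm_nonneg _).trans hadd
  have hN : 0 < normSq x + normSq y := by
    rcases hxy with h | h
    · exact add_pos_of_pos_of_nonneg (normSq_pos.2 h) (normSq_nonneg y)
    · exact add_pos_of_nonneg_of_pos (normSq_nonneg x) (normSq_pos.2 h)
  have hle := normSq_rotation_add_reflection_apply_le a b x y hsc hadd hsub
  rw [hx, hy, normSq_mul, normSq_mul, ← mul_add] at hle
  have hl : ‖l‖ ^ 2 ≤ K ^ 2 := by
    rw [Complex.sq_norm]; exact le_of_mul_le_mul_right hle hN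
  exact (pow_le_pow_iff_left₀ (norm_nonneg _) hK two_ne_zero).1 hl

end RotationReflection

lemma norm_le_of_norm_add_le_of_norm_sub_le {a b : ℂ} {K : ℝ} (hadd : ‖a + b‖ ≤ K)
    (hsub : ‖a - b‖ ≤ K) : ‖a‖ ≤ K :=
  calc ‖a‖ = ‖(a + b) + (a - b)‖ / 2 := by
        rw [show (a + b) + (a - b) = 2 * a by ring, norm_mul, Complex.norm_two]; ring
    _ ≤ (‖a + b‖ + ‖a - b‖) / 2 := by gcongr; exact norm_add_le _ _
    _ ≤ K := by linarith

/-- `(b - a s, w)` is an eigenvector for `a c + w`; when it vanishes, `a c + w = a c` directly. -/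
lemma norm_mul_add_le_of_sq_eq {a b w : ℂ} {s c K : ℝ} (hsc : s ^ 2 + c ^ 2 = 1)
    (hw : w ^ 2 = b ^ 2 - a ^ 2 * (s : ℂ) ^ 2) (hadd : ‖a + b‖ ≤ K) (hsub : ‖a - b‖ ≤ K) :
    ‖a * c + w‖ ≤ K := by
  by_cases hxy : b - a * s ≠ 0 ∨ w ≠ 0
  · exact norm_le_of_rotation_add_reflection_eigenvector a b _ _ hsc hadd hsub (by ring)
      (by linear_combination -hw) hxy
  · rw [not_or, not_not, not_not] at hxy
    obtain ⟨-, rfl⟩ := hxy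
    have hc : |c| ≤ 1 := abs_le_of_sq_le_sq (by nlinarith) zero_le_one
    calc ‖a * c + 0‖ = ‖a‖ * |c| := by simp
      _ ≤ K * 1 := by
        gcongr
        · exact (norm_nonneg _).trans hadd
        · exact norm_le_of_norm_add_le_of_norm_sub_le hadd hsub
      _ = K := mul_one K

theorem stmt_19 (a b : ℂ) (θ : ℝ) (w : ℂ)
    (hw : w ^ 2 = b ^ 2 - a ^ 2 * (Real.sin θ : ℂ) ^ 2) :
    (a * (Real.cos θ : ℂ) + w) * (a * (Real.cos θ : ℂ) - w) = a ^ 2 - b ^ 2 ∧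
    (‖a + b‖ ≤ 1 → ‖a - b‖ ≤ 1 →
      ‖a * (Real.cos θ : ℂ) + w‖ ≤ 1 ∧
      ‖a * (Real.cos θ : ℂ) - w‖ ≤ 1) := by
  have hsc := Real.sin_sq_add_cos_sq θ
  refine ⟨?_, fun hadd hsub => ⟨norm_mul_add_le_of_sq_eq hsc hw hadd hsub, ?_⟩⟩
  · linear_combination -hw + a ^ 2 * (by exact_mod_cast congrArg ofReal hsc :
      (Real.sin θ : ℂ) ^ 2 + (Real.cos θ : ℂ) ^ 2 = 1)
  · rw [sub_eq_add_neg]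
    exact norm_mul_add_le_of_sq_eq hsc (by rw [neg_sq, hw]) hadd hsub
end
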